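/- Let $F \colon \mathcal{T}_1 \to \mathcal{T}_2$ be a fully faithful exact functor between triangulated categories admitting a right adjoint $G \colon \mathcal{T}_2 \to \mathcal{T}_1$. Then the counit exhibits $G \circ F \cong \mathrm{id}_{\mathcal{T}_1}$, $G$ is a Verdier localization, and consequently the countable Rouquier dimension satisfies $\mathrm{Cdim}(\mathcal{T}_1) \leq \mathrm{Cdim}(\mathcal{T}_2)$. -/

import Mathlib

/-!
STATEMENT 11.  `F : T₁ ⥤ T₂` a fully faithful exact (triangulated) functor with a right
adjoint `G`.  Then the (co)unit exhibits `G ∘ F ≅ id`, `G` is a Verdier localization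
(a localization at the class of morphisms it inverts), and the countable Rouquier
dimensions satisfy `Cdim T₁ ≤ Cdim T₂`.

We define the additive closure `add S`, the generation levels `⟨S⟩ₙ` and the countable
Rouquier dimension `Cdim` for a pretriangulated category, following the paper.
-/

universe v₁ v₂ u₁ u₂

open CategoryTheory Limits Pretriangulated

namespace CountableRouquier

variable {T : Type u₁} [Category.{v₁} T] [Preadditive T] [HasZeroObject T]
  [HasShift T ℤ] [∀ n : ℤ, (shiftFunctor T n).Additive] [Pretriangulated T]

/-- The additive closure `add S` of a class of objects `S`: the closure of the shifts of
objects of `S` under finite direct sums and direct summands (retracts). -/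
inductive addClo (S : Set T) : T → Prop
  | of {X : T} : X ∈ S → addClo S X
  | zero {X : T} : IsZero X → addClo S X
  | shift {X : T} (n : ℤ) : addClo S X → addClo S (X⟦n⟧)
  | retract {X Y : T} (i : X ⟶ Y) (p : Y ⟶ X) : i ≫ p = 𝟙 X → addClo S Y → addClo S X
  | sum {X Y Z : T} (i₁ : X ⟶ Z) (i₂ : Y ⟶ Z) (p₁ : Z ⟶ X) (p₂ : Z ⟶ Y) :
      i₁ ≫ p₁ = 𝟙 X → i₂ ≫ p₂ = 𝟙 Y → i₁ ≫ p₂ = 0 → i₂ ≫ p₁ = 0 →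
      p₁ ≫ i₁ + p₂ ≫ i₂ = 𝟙 Z → addClo S X → addClo S Y → addClo S Z

/-- The generation levels `⟨S⟩ₙ`: `⟨S⟩₀ = add ∅`, `⟨S⟩₁ = add S`, and `⟨S⟩ₙ` for `n > 1`
is the additive closure of the cones of morphisms from `⟨S⟩ₙ₋₁` to `⟨S⟩₁`. -/
def genLevel (S : Set T) : ℕ → Set T
  | 0 => {X | IsZero X}
  | 1 => {X | addClo S X}
  | (n + 2) => {Z | addClo {W | ∃ (X Y : T) (f : X ⟶ Y) (g : Y ⟶ W) (h : W ⟶ X⟦(1 : ℤ)⟧),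
      X ∈ genLevel S (n + 1) ∧ addClo S Y ∧ Triangle.mk f g h ∈ distTriang T} Z}

variable (T)

/-- `T` is generated in `n + 1` steps by a countable collection of objects. -/
def CdimLE (n : ℕ) : Prop :=
  ∃ C : Set T, C.Countable ∧ ∀ X : T, X ∈ genLevel C (n + 1)

/-- The countable Rouquier dimension: the smallest `n ≥ 0` such that `T = ⟨𝒞⟩_{n+1}` for a
countable collection `𝒞` of objects of `T` (and `⊤` if there is no such `n`). -/
noncomputable def Cdim : ℕ∞ :=
  sInf {n : ℕ∞ | ∃ m : ℕ, n = m ∧ CdimLE T m}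

end CountableRouquier

open CountableRouquier


set_option linter.unusedSectionVars false
set_option linter.unnecessarySimpa false
set_option maxHeartbeats 1000000

namespace Stmt11

variable {T₁ : Type u₁} [Category.{v₁} T₁] [Preadditive T₁] [HasZeroObject T₁]
  [HasShift T₁ ℤ] [∀ n : ℤ, (shiftFunctor T₁ n).Additive] [Pretriangulated T₁]
  {T₂ : Type u₂} [Category.{v₂} T₂] [Preadditive T₂] [HasZeroObject T₂]
  [HasShift T₂ ℤ] [∀ n : ℤ, (shiftFunctor T₂ n).Additive] [Pretriangulated T₂]
  (F : T₁ ⥤ T₂) [F.CommShift ℤ] [F.IsTriangulated] [F.Full] [F.Faithful]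
  (G : T₂ ⥤ T₁)

lemma comp_counit_bij (adj : F ⊣ G) (B : T₁) (X : T₂) :
    Function.Bijective (fun (s : F.obj B ⟶ F.obj (G.obj X)) => s ≫ adj.counit.app X) := by
  have hF : Function.Bijective (fun (t : B ⟶ G.obj X) => F.map t) :=
    ⟨fun _ _ h => F.map_injective h, F.map_surjective⟩
  rw [← Function.Bijective.of_comp_iff _ hF]
  have heq : (fun (s : F.obj B ⟶ F.obj (G.obj X)) => s ≫ adj.counit.app X) ∘
      (fun (t : B ⟶ G.obj X) => F.map t) = fun t => (adj.homEquiv B X).symm t := by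
    funext t
    exact (adj.homEquiv_counit _ _ t).symm
  rw [heq]
  exact (adj.homEquiv B X).symm.bijective

lemma counit_shift_bij (adj : F ⊣ G) (A : T₁) (X : T₂) :
    Function.Bijective (fun (q : F.obj A ⟶ (F.obj (G.obj X))⟦(1:ℤ)⟧) =>
      q ≫ (adj.counit.app X)⟦(1:ℤ)⟧') := by
  have hm : Function.Bijective
      (fun (r : (F.obj A)⟦(-1:ℤ)⟧ ⟶ F.obj (G.obj X)) => r ≫ adj.counit.app X) := by
    set j := (F.commShiftIso (-1:ℤ)).hom.app A with hjdef
    have heq : (fun (r : (F.obj A)⟦(-1:ℤ)⟧ ⟶ F.obj (G.obj X)) => r ≫ adj.counit.app X) =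
        (fun (s' : F.obj (A⟦(-1:ℤ)⟧) ⟶ X) => inv j ≫ s') ∘
        ((fun (s : F.obj (A⟦(-1:ℤ)⟧) ⟶ F.obj (G.obj X)) => s ≫ adj.counit.app X) ∘
        (fun (r : (F.obj A)⟦(-1:ℤ)⟧ ⟶ F.obj (G.obj X)) => j ≫ r)) := by
      funext r
      simp
    rw [heq]
    refine Function.Bijective.comp ?_ (Function.Bijective.comp (comp_counit_bij F G adj _ X) ?_)
    · exact ⟨fun a b hh => by rwa [cancel_epi] at hh, fun s => ⟨j ≫ s, by simp⟩⟩
    · exact ⟨fun a b hh => by rwa [cancel_epi] at hh, fun s => ⟨inv j ≫ s, by simp⟩⟩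
  let ad : shiftFunctor T₂ (-1:ℤ) ⊣ shiftFunctor T₂ (1:ℤ) := (shiftEquiv T₂ (1:ℤ)).symm.toAdjunction
  rw [← Function.Bijective.of_comp_iff _ (ad.homEquiv (F.obj A) (F.obj (G.obj X))).bijective]
  have heq : (fun (q : F.obj A ⟶ (F.obj (G.obj X))⟦(1:ℤ)⟧) => q ≫ (adj.counit.app X)⟦(1:ℤ)⟧') ∘
      ⇑(ad.homEquiv (F.obj A) (F.obj (G.obj X))) =
      ⇑(ad.homEquiv (F.obj A) X) ∘
      (fun r => r ≫ adj.counit.app X) := by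
    funext r
    exact (ad.homEquiv_naturality_right r (adj.counit.app X)).symm
  rw [heq]
  exact (ad.homEquiv _ _).bijective.comp hm

noncomputable def theta (adj : F ⊣ G) (A : T₁) (X : T₂) (y : A ⟶ (G.obj X)⟦(1:ℤ)⟧) :
    F.obj A ⟶ X⟦(1:ℤ)⟧ :=
  F.map y ≫ (F.commShiftIso (1:ℤ)).hom.app (G.obj X) ≫ (adj.counit.app X)⟦(1:ℤ)⟧'

lemma theta_zero (adj : F ⊣ G) (A : T₁) (X : T₂) : theta F G adj A X 0 = 0 := by
  simp [theta]

lemma theta_bij (adj : F ⊣ G) (A : T₁) (X : T₂) :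
    Function.Bijective (theta F G adj A X) := by
  have h1 : Function.Bijective (fun (y : A ⟶ (G.obj X)⟦(1:ℤ)⟧) => F.map y) :=
    ⟨fun _ _ h => F.map_injective h, F.map_surjective⟩
  have h2 : Function.Bijective (fun (q : F.obj A ⟶ F.obj ((G.obj X)⟦(1:ℤ)⟧)) =>
      q ≫ (F.commShiftIso (1:ℤ)).hom.app (G.obj X)) :=
    ⟨fun a b hh => by rwa [cancel_mono] at hh,
     fun r => ⟨r ≫ (F.commShiftIso (1:ℤ)).inv.app (G.obj X), by simp⟩⟩
  have heq : theta F G adj A X =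
      (fun (q : F.obj A ⟶ (F.obj (G.obj X))⟦(1:ℤ)⟧) => q ≫ (adj.counit.app X)⟦(1:ℤ)⟧') ∘
      ((fun (q : F.obj A ⟶ F.obj ((G.obj X)⟦(1:ℤ)⟧)) =>
        q ≫ (F.commShiftIso (1:ℤ)).hom.app (G.obj X)) ∘
       (fun (y : A ⟶ (G.obj X)⟦(1:ℤ)⟧) => F.map y)) := by
    funext y
    simp [theta]
  rw [heq]
  exact (counit_shift_bij F G adj A X).comp (h2.comp h1)

lemma theta_comp (adj : F ⊣ G) {A : T₁} {X Y : T₂} (y : A ⟶ (G.obj X)⟦(1:ℤ)⟧) (f : X ⟶ Y) :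
    theta F G adj A Y (y ≫ (G.map f)⟦(1:ℤ)⟧') = theta F G adj A X y ≫ f⟦(1:ℤ)⟧' := by
  have hnat : F.map ((G.map f)⟦(1:ℤ)⟧') ≫ (F.commShiftIso (1:ℤ)).hom.app (G.obj Y) =
      (F.commShiftIso (1:ℤ)).hom.app (G.obj X) ≫ (F.map (G.map f))⟦(1:ℤ)⟧' :=
    (F.commShiftIso (1:ℤ)).hom.naturality (G.map f)
  have hcu : F.map (G.map f) ≫ adj.counit.app Y = adj.counit.app X ≫ f := by
    simpa using adj.counit.naturality f
  simp only [theta, Functor.map_comp, Category.assoc]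
  rw [← Category.assoc (F.map ((G.map f)⟦(1:ℤ)⟧')), hnat, Category.assoc,
    ← Functor.map_comp, hcu, Functor.map_comp]

lemma cone_iso (adj : F ⊣ G) {X Y Z : T₂} {f : X ⟶ Y} {g : Y ⟶ Z} {h : Z ⟶ X⟦(1:ℤ)⟧}
    (hT : Triangle.mk f g h ∈ distTriang T₂)
    {W : T₁} {u : G.obj Y ⟶ W} {v : W ⟶ (G.obj X)⟦(1:ℤ)⟧}
    (hD : Triangle.mk (G.map f) u v ∈ distTriang T₁) :
    Nonempty (G.obj Z ≅ W) := by
  have hFD := F.map_distinguished _ hD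
  obtain ⟨c, hc₁', hc₂'⟩ : ∃ c : F.obj W ⟶ Z, F.map u ≫ c = adj.counit.app Y ≫ g ∧
      (F.map v ≫ (F.commShiftIso (1:ℤ)).hom.app (G.obj X)) ≫
        (adj.counit.app X)⟦(1:ℤ)⟧' = c ≫ h :=
    complete_distinguished_triangle_morphism _ _ hFD hT
    (adj.counit.app X) (adj.counit.app Y) (by exact adj.counit.naturality f)
  have hc₁ : F.map u ≫ c = adj.counit.app Y ≫ g := hc₁'
  have hc₂ : (F.map v ≫ (F.commShiftIso (1:ℤ)).hom.app (G.obj X)) ≫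
      (adj.counit.app X)⟦(1:ℤ)⟧' = c ≫ h := hc₂'
  have hc₂'' : c ≫ h = F.map v ≫ (F.commShiftIso (1:ℤ)).hom.app (G.obj X) ≫
      (adj.counit.app X)⟦(1:ℤ)⟧' := by rw [← hc₂, Category.assoc]
  have key : ∀ (A : T₁), Function.Bijective (fun (x : A ⟶ W) => F.map x ≫ c) := by
    intro A
    have hθX := theta_bij F G adj A X
    have hθY := theta_bij F G adj A Y
    constructor
    · intro x x' hxx
      have hd : F.map (x - x') ≫ c = 0 := by
        rw [F.map_sub, Preadditive.sub_comp]
        simp only at hxx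
        rw [hxx, sub_self]
      have h5 : (x - x') ≫ v = 0 := by
        apply hθX.injective
        rw [theta_zero]
        show F.map ((x - x') ≫ v) ≫ _ = 0
        rw [F.map_comp, Category.assoc, ← hc₂'', ← Category.assoc, hd, zero_comp]
      have hex : ∃ s : A ⟶ G.obj Y, x - x' = s ≫ u :=
        Triangle.coyoneda_exact₃ _ hD (x - x') h5
      obtain ⟨s, hs⟩ := hex
      have h6 : (F.map s ≫ adj.counit.app Y) ≫ g = 0 := by
        rw [Category.assoc, ← hc₁, ← Category.assoc, ← F.map_comp, ← hs, hd]
      have hex2 : ∃ t : F.obj A ⟶ X, F.map s ≫ adj.counit.app Y = t ≫ f :=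
        Triangle.coyoneda_exact₂ _ hT (F.map s ≫ adj.counit.app Y) h6
      obtain ⟨t, ht⟩ := hex2
      have hr : F.map (adj.homEquiv A X t) ≫ adj.counit.app X = t := by
        rw [← adj.homEquiv_counit A X (adj.homEquiv A X t), Equiv.symm_apply_apply]
      have hcu : F.map (G.map f) ≫ adj.counit.app Y = adj.counit.app X ≫ f := by
        simpa using adj.counit.naturality f
      have h7 : s = (adj.homEquiv A X t) ≫ G.map f := by
        apply (adj.homEquiv A Y).symm.injective
        rw [adj.homEquiv_counit A Y s, adj.homEquiv_counit A Y _, ht, F.map_comp,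
          Category.assoc, hcu, ← Category.assoc, hr]
      have hD12 : G.map f ≫ u = 0 := comp_distTriang_mor_zero₁₂ _ hD
      have hzero : x - x' = 0 := by
        rw [hs, h7, Category.assoc, hD12, comp_zero]
      exact sub_eq_zero.mp hzero
    · intro z
      obtain ⟨y, hy⟩ := hθX.surjective (z ≫ h)
      have hT31 : h ≫ f⟦(1:ℤ)⟧' = 0 := comp_distTriang_mor_zero₃₁ _ hT
      have h8 : y ≫ (G.map f)⟦(1:ℤ)⟧' = 0 := by
        apply hθY.injective
        rw [theta_zero, theta_comp, hy, Category.assoc, hT31, comp_zero]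
      have hex : ∃ x : A ⟶ W, y = x ≫ v := Triangle.coyoneda_exact₁ _ hD y h8
      obtain ⟨x, hx⟩ := hex
      have h9 : (z - F.map x ≫ c) ≫ h = 0 := by
        rw [Preadditive.sub_comp, Category.assoc, hc₂'',
          ← Category.assoc (F.map x) (F.map v), ← F.map_comp, ← hx]
        show z ≫ h - theta F G adj A X y = 0
        rw [hy, sub_self]
      have hex2 : ∃ z' : F.obj A ⟶ Y, z - F.map x ≫ c = z' ≫ g :=
        Triangle.coyoneda_exact₃ _ hT _ h9
      obtain ⟨z', hz'⟩ := hex2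
      refine ⟨x + (adj.homEquiv A Y z') ≫ u, ?_⟩
      show F.map (x + (adj.homEquiv A Y z') ≫ u) ≫ c = z
      have hz'' : F.map (adj.homEquiv A Y z') ≫ adj.counit.app Y = z' := by
        rw [← adj.homEquiv_counit A Y (adj.homEquiv A Y z'), Equiv.symm_apply_apply]
      rw [F.map_add, Preadditive.add_comp, F.map_comp, Category.assoc, hc₁,
        ← Category.assoc, hz'', ← hz']
      abel
  set φ := adj.homEquiv W Z c with hφdef
  have hφ : IsIso φ := by
    apply isIso_of_yoneda_map_bijective
    intro A
    have : (fun (x : A ⟶ W) => x ≫ φ) = (adj.homEquiv A Z) ∘ (fun x => F.map x ≫ c) := by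
      funext x
      exact (adj.homEquiv_naturality_left x c).symm
    rw [this]
    exact (adj.homEquiv A Z).bijective.comp (key A)
  exact ⟨(asIso φ).symm⟩

lemma g_additive (adj : F ⊣ G) : G.Additive := by
  haveI : PreservesLimitsOfSize.{0,0} G := adj.rightAdjoint_preservesLimits
  haveI : G.IsRightAdjoint := ⟨F, ⟨adj⟩⟩
  exact Functor.additive_of_preserves_binary_products G

noncomputable def shiftIso (adj : F ⊣ G) (n : ℤ) :
    G ⋙ shiftFunctor T₁ n ≅ shiftFunctor T₂ n ⋙ G :=
  Adjunction.rightAdjointUniq (((shiftEquiv T₁ n).symm.toAdjunction).comp adj)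
    ((adj.comp ((shiftEquiv T₂ n).symm.toAdjunction)).ofNatIsoLeft (F.commShiftIso (-n)).symm)

lemma addClo_map (adj : F ⊣ G) {S : Set T₂} {B : Set T₁}
    (him : ∀ s ∈ S, addClo B (G.obj s)) :
    ∀ X, addClo S X → addClo B (G.obj X) := by
  haveI : G.Additive := g_additive F G adj
  intro X hX
  induction hX with
  | of hmem => exact him _ hmem
  | zero hz =>
      refine addClo.zero ?_
      rw [IsZero.iff_id_eq_zero] at hz ⊢
      rw [← G.map_id, hz, G.map_zero]
  | shift n _ ih =>
      exact addClo.retract ((shiftIso F G adj n).app _).inv ((shiftIso F G adj n).app _).hom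
        (Iso.inv_hom_id _) (addClo.shift n ih)
  | retract i p hip _ ih =>
      exact addClo.retract (G.map i) (G.map p) (by rw [← G.map_comp, hip, G.map_id]) ih
  | sum i₁ i₂ p₁ p₂ h₁ h₂ h₃ h₄ h₅ _ _ ih₁ ih₂ =>
      exact addClo.sum (G.map i₁) (G.map i₂) (G.map p₁) (G.map p₂)
        (by rw [← G.map_comp, h₁, G.map_id]) (by rw [← G.map_comp, h₂, G.map_id])
        (by rw [← G.map_comp, h₃, G.map_zero]) (by rw [← G.map_comp, h₄, G.map_zero])
        (by rw [← G.map_comp, ← G.map_comp, ← G.map_add, h₅, G.map_id]) ih₁ ih₂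

lemma genLevel_iso {S : Set T₁} {k : ℕ} {X Y : T₁} (e : X ≅ Y)
    (hY : Y ∈ genLevel S (k+1)) : X ∈ genLevel S (k+1) := by
  match k with
  | 0 => exact addClo.retract e.hom e.inv e.hom_inv_id hY
  | (n+1) => exact addClo.retract e.hom e.inv e.hom_inv_id hY

lemma genLevel_map (adj : F ⊣ G) (C : Set T₂) (k : ℕ) :
    ∀ V ∈ genLevel C (k+1), G.obj V ∈ genLevel (G.obj '' C) (k+1) := by
  induction k with
  | zero =>
      intro V hV
      exact addClo_map F G adj (S := C) (B := G.obj '' C)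
        (fun s hs => addClo.of ⟨s, hs, rfl⟩) V hV
  | succ n ih =>
      intro V hV
      show addClo {W | ∃ (X Y : T₁) (f : X ⟶ Y) (g : Y ⟶ W) (h : W ⟶ X⟦(1 : ℤ)⟧),
        X ∈ genLevel (G.obj '' C) (n + 1) ∧ addClo (G.obj '' C) Y ∧
        Triangle.mk f g h ∈ distTriang T₁} (G.obj V)
      refine addClo_map F G adj ?_ V hV
      rintro s ⟨X, Y, f, g, h, hX, hY, hT⟩
      obtain ⟨W, u, v, hD⟩ := Pretriangulated.distinguished_cocone_triangle (G.map f)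
      obtain ⟨e⟩ := cone_iso F G adj hT hD
      refine addClo.of ⟨G.obj X, G.obj Y, G.map f, u ≫ e.inv, e.hom ≫ v, ih X hX,
        addClo_map F G adj (S := C) (B := G.obj '' C)
          (fun s hs => addClo.of ⟨s, hs, rfl⟩) Y hY, ?_⟩
      exact isomorphic_distinguished _ hD _
        (Triangle.isoMk _ _ (Iso.refl _) (Iso.refl _) e
          (by exact (Category.comp_id _).trans (Category.id_comp _).symm)
          (by exact (by simp : (u ≫ e.inv) ≫ e.hom = u).trans (Category.id_comp u).symm)
          (by exact (by simp : (e.hom ≫ v) ≫ (shiftFunctor T₁ (1:ℤ)).map (𝟙 (G.obj X)) =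
            e.hom ≫ v)))

lemma cdimLE_trans (adj : F ⊣ G) (n : ℕ) (hn : CdimLE T₂ n) : CdimLE T₁ n := by
  obtain ⟨C, hC, hgen⟩ := hn
  refine ⟨G.obj '' C, hC.image _, fun X => ?_⟩
  exact genLevel_iso (asIso (adj.unit.app X))
    (genLevel_map F G adj C n (F.obj X) (hgen (F.obj X)))

lemma cdim_le (adj : F ⊣ G) : Cdim T₁ ≤ Cdim T₂ := by
  apply sInf_le_sInf
  rintro x ⟨m, rfl, hm⟩
  exact ⟨m, rfl, cdimLE_trans F G adj m hm⟩

lemma isLoc (adj : F ⊣ G) :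
    G.IsLocalization ((MorphismProperty.isomorphisms T₁).inverseImage G) := by
  let W : MorphismProperty T₂ := (MorphismProperty.isomorphisms T₁).inverseImage G
  have hG : W.IsInvertedBy G := fun _ _ _ hf => hf
  have hW : ∀ (X : T₂), W (adj.counit.app X) := by
    intro X
    show IsIso (G.map (adj.counit.app X))
    have h1 : adj.unit.app (G.obj X) ≫ G.map (adj.counit.app X) = 𝟙 (G.obj X) :=
      adj.right_triangle_components X
    haveI : IsIso (adj.unit.app (G.obj X) ≫ G.map (adj.counit.app X)) := by
      rw [h1]
      exact inferInstanceAs (IsIso (𝟙 (G.obj X)))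
    exact IsIso.of_isIso_comp_left (adj.unit.app (G.obj X)) (G.map (adj.counit.app X))
  have hQ : ∀ (X : T₂), IsIso ((Functor.whiskerRight adj.counit W.Q).app X) := fun X =>
    Localization.inverts W.Q W _ (hW X)
  haveI : IsIso (Functor.whiskerRight adj.counit W.Q) := NatIso.isIso_of_isIso_app _
  let e : W.Localization ≌ T₁ := CategoryTheory.Equivalence.mk (Localization.lift G hG W.Q) (F ⋙ W.Q)
    (Localization.liftNatIso W.Q W W.Q (G ⋙ F ⋙ W.Q) _ _
      (W.Q.leftUnitor.symm ≪≫ (asIso (Functor.whiskerRight adj.counit W.Q)).symm ≪≫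
        Functor.associator G F W.Q))
    (Functor.associator _ _ _ ≪≫ Functor.isoWhiskerLeft F (Localization.fac G hG W.Q) ≪≫
      (asIso adj.unit).symm)
  apply Functor.IsLocalization.of_equivalence_target W.Q W G e (Localization.fac G hG W.Q)

end Stmt11

theorem stmt_11
    {T₁ : Type u₁} [Category.{v₁} T₁] [Preadditive T₁] [HasZeroObject T₁]
    [HasShift T₁ ℤ] [∀ n : ℤ, (shiftFunctor T₁ n).Additive] [Pretriangulated T₁]
    {T₂ : Type u₂} [Category.{v₂} T₂] [Preadditive T₂] [HasZeroObject T₂]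
    [HasShift T₂ ℤ] [∀ n : ℤ, (shiftFunctor T₂ n).Additive] [Pretriangulated T₂]
    (F : T₁ ⥤ T₂) [F.CommShift ℤ] [F.IsTriangulated] [F.Full] [F.Faithful]
    (G : T₂ ⥤ T₁) (adj : F ⊣ G) :
    IsIso adj.unit ∧
    G.IsLocalization (fun _ _ f => IsIso (G.map f)) ∧
    Cdim T₁ ≤ Cdim T₂ := by
  refine ⟨inferInstance, ?_, Stmt11.cdim_le F G adj⟩
  exact Stmt11.isLoc F G adj
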